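/- Suppose M is a d-CFF(t,n), blocks B₁,…,Bₙ have hash values h₁,…,hₙ under an injective function h, tests are defined by T_i = h(concatenation of h_j over j with M_{i,j}=1), and a modified document B' with hashes h'₁,…,h'ₙ differs from B in a set D of at most d block indices (h'_j = h_j iff j ∉ D). If the concatenation-hash map is injective, then the set of failing tests F = { i : T_i ≠ T'_i } equals { i : ∃ j ∈ D, M_{i,j} = 1 }, and the CFF decoding applied to F recovers D exactly. -/

import Mathlib

/-!
Since the concatenation hash is injective, a test fails exactly when the hash of one of its
blocks changes, i.e. when its row meets `D`. Conversely, for a column `c ∉ D`, pad `D` to a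
`d`-set avoiding `c` (possible as `n ≥ d + 1`): the cover-free property gives a row containing `c`
and disjoint from `D`, i.e. a passing row that clears `c`, so decoding returns exactly `D`.
-/

/-- `M` is a `d`-cover-free family with `t` rows and `n` columns:
`n ≥ d+1` and for every set `C` of `d` column indices and column `c ∉ C`,
some row has a `1` in column `c` and `0` in all columns of `C`. -/
def IsCFF (d t n : ℕ) (M : Fin t → Fin n → Bool) : Prop :=
  d + 1 ≤ n ∧ ∀ (C : Finset (Fin n)) (c : Fin n), C.card = d → c ∉ C →
    ∃ i : Fin t, M i c = true ∧ ∀ j ∈ C, M i j = false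

def cffDecode {t n : ℕ} (M : Fin t → Fin n → Bool) (F : Set (Fin t)) : Set (Fin n) :=
  {j | ∀ i, i ∉ F → M i j = false}

lemma masked_eq_masked_iff {κ α : Type*} (r : κ → Bool) (h h' : κ → α) :
    (fun j => if r j = true then some (h j) else none)
      = (fun j => if r j = true then some (h' j) else none) ↔ ∀ j, r j = true → h j = h' j := by
  refine ⟨fun heq j hj => ?_, fun hagree => funext fun j => ?_⟩
  · simpa [hj] using congrFun heq j
  · by_cases hj : r j = true
    · simp [hj, hagree j hj]
    · simp [hj]

lemma setOf_test_ne_eq {ι κ α β : Type*} (M : ι → κ → Bool) (h h' : κ → α) (D : Set κ)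
    (hdiff : ∀ j, h' j = h j ↔ j ∉ D)
    (g : (κ → Option α) → β) (hg : Function.Injective g) (T T' : ι → β)
    (hT : ∀ i, T i = g (fun j => if M i j = true then some (h j) else none))
    (hT' : ∀ i, T' i = g (fun j => if M i j = true then some (h' j) else none)) :
    {i | T i ≠ T' i} = {i | ∃ j ∈ D, M i j = true} := by
  ext i
  simp only [Set.mem_ofPred_eq, hT, hT', hg.ne_iff, ne_eq, masked_eq_masked_iff, not_forall]
  constructor
  · rintro ⟨j, hj, hne⟩
    exact ⟨j, by simpa [eq_comm] using mt (hdiff j).2 (Ne.symm hne), hj⟩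
  · rintro ⟨j, hjD, hj⟩
    exact ⟨j, hj, fun heq => (hdiff j).1 heq.symm hjD⟩

lemma IsCFF.exists_row_of_card_le {d t n : ℕ} {M : Fin t → Fin n → Bool} (hM : IsCFF d t n M)
    {D : Finset (Fin n)} (hD : D.card ≤ d) {c : Fin n} (hc : c ∉ D) :
    ∃ i, M i c = true ∧ ∀ j ∈ D, M i j = false := by
  have hcard : d ≤ (Finset.univ.erase c).card := by
    rw [Finset.card_erase_of_mem (Finset.mem_univ c), Finset.card_univ, Fintype.card_fin]
    have := hM.1
    omega
  obtain ⟨C, hDC, hCc, hCcard⟩ := Finset.exists_subsuperset_card_eq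
    (Finset.subset_erase.2 ⟨D.subset_univ, hc⟩) hD hcard
  obtain ⟨i, hic, hiC⟩ := hM.2 C c hCcard fun hcC => (Finset.mem_erase.1 (hCc hcC)).1 rfl
  exact ⟨i, hic, fun j hj => hiC j (hDC hj)⟩

lemma IsCFF.cffDecode_eq {d t n : ℕ} {M : Fin t → Fin n → Bool} (hM : IsCFF d t n M)
    {D : Finset (Fin n)} (hD : D.card ≤ d) :
    cffDecode M {i | ∃ j ∈ D, M i j = true} = D := by
  ext c
  simp only [cffDecode, Set.mem_ofPred_eq, not_exists, not_and, Finset.mem_coe]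
  constructor
  · intro hdec
    by_contra hc
    obtain ⟨i, hic, hiD⟩ := hM.exists_row_of_card_le hD hc
    simp [hdec i fun j hj => by simp [hiD j hj]] at hic
  · intro hc i hi
    simpa using hi c hc

theorem stmt_12_general {d t n : ℕ} {α β : Type*} (M : Fin t → Fin n → Bool) (hM : IsCFF d t n M)
    (h h' : Fin n → α)
    (D : Finset (Fin n)) (hD : D.card ≤ d)
    (hdiff : ∀ j : Fin n, h' j = h j ↔ j ∉ D)
    (g : (Fin n → Option α) → β) (hg : Function.Injective g)
    (T T' : Fin t → β)
    (hT : ∀ i, T i = g (fun j => if M i j = true then some (h j) else none))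
    (hT' : ∀ i, T' i = g (fun j => if M i j = true then some (h' j) else none)) :
    {i : Fin t | T i ≠ T' i} = {i : Fin t | ∃ j ∈ D, M i j = true} ∧
    {j : Fin n | ∀ i : Fin t, i ∉ {i : Fin t | T i ≠ T' i} → M i j = false}
      = (↑D : Set (Fin n)) := by
  have hfail := setOf_test_ne_eq M h h' D hdiff g hg T T' hT hT'
  refine ⟨hfail, ?_⟩
  rw [hfail]
  exact hM.cffDecode_eq hD

theorem stmt_12 {d t n : ℕ} {α β : Type*} (M : Fin t → Fin n → Bool) (hM : IsCFF d t n M)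
    (h h' : Fin n → α) (hh : Function.Injective h)
    (D : Finset (Fin n)) (hD : D.card ≤ d)
    (hdiff : ∀ j : Fin n, h' j = h j ↔ j ∉ D)
    (g : (Fin n → Option α) → β) (hg : Function.Injective g)
    (T T' : Fin t → β)
    (hT : ∀ i, T i = g (fun j => if M i j = true then some (h j) else none))
    (hT' : ∀ i, T' i = g (fun j => if M i j = true then some (h' j) else none)) :
    {i : Fin t | T i ≠ T' i} = {i : Fin t | ∃ j ∈ D, M i j = true} ∧
    {j : Fin n | ∀ i : Fin t, i ∉ {i : Fin t | T i ≠ T' i} → M i j = false}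
      = (↑D : Set (Fin n)) :=
  stmt_12_general M hM h h' D hD hdiff g hg T T' hT hT'
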